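/- Let X_1, ..., X_{N_s} be real-valued random variables on a probability space that are independent and identically distributed, with N_s ≥ 2. Let X̂ be the sample mean and σ̂ the sample standard deviation of X_1,...,X_{N_s}, and assume σ̂ > 0 almost surely. Then for every λ > 0 and every index i ∈ {1,...,N_s}, P(X_i − X̂ ≥ λ·σ̂) ≤ 1/(λ² + 1). -/

import Mathlib

/-!
Within one sample the deviations `dⱼ = Xⱼ - X̂` sum to zero and have mean square `σ̂²`, so a
deterministic Cantelli inequality shows that at most `N / (λ² + 1)` indices satisfy
`dⱼ ≥ λ σ̂`.
Since the sample is i.i.d., permuting coordinates does not change its joint law, so all `N`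
events `{dⱼ ≥ λ σ̂}` have the same probability, which is therefore at most the expected count
divided by `N`.
-/

open MeasureTheory ProbabilityTheory Finset
open scoped ENNReal

theorem finite_cantelli {ι : Type*} [Fintype ι] (d : ι → ℝ) (hd : ∑ j, d j = 0)
    {b : ℝ} (hb : 0 ≤ b) :
    (#{j | b ≤ d j} : ℝ) * b ^ 2 * Fintype.card ι ≤
      (Fintype.card ι - #{j | b ≤ d j}) * ∑ j, d j ^ 2 := by
  set S : Finset ι := {j | b ≤ d j}
  set T : Finset ι := {j | ¬ b ≤ d j}
  have hcard : (#S : ℝ) + #T = Fintype.card ι := by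
    exact_mod_cast card_filter_add_card_filter_not (s := univ) (fun j => b ≤ d j)
  have hsum : ∑ j ∈ S, d j + ∑ j ∈ T, d j = 0 := by
    rw [sum_filter_add_sum_filter_not, hd]
  have hsum_sq : ∑ j ∈ S, d j ^ 2 + ∑ j ∈ T, d j ^ 2 = ∑ j, d j ^ 2 :=
    sum_filter_add_sum_filter_not _ _ _
  have hS : #S * b ≤ ∑ j ∈ S, d j := by
    simpa using card_nsmul_le_sum S d b fun j hj => (mem_filter.mp hj).2
  have hS_sq : #S * b ^ 2 ≤ ∑ j ∈ S, d j ^ 2 := by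
    simpa using card_nsmul_le_sum S (d · ^ 2) (b ^ 2) fun j hj =>
      pow_le_pow_left₀ hb (mem_filter.mp hj).2 2
  have hT : (∑ j ∈ T, d j) ^ 2 ≤ #T * ∑ j ∈ T, d j ^ 2 := sq_sum_le_card_mul_sum_sq
  have hkb : 0 ≤ (#S : ℝ) * b := by positivity
  -- `∑_T d = -∑_S d`, so `hT` bounds `#T * ∑_T d²` below by `(#S * b)²`.
  rw [← hcard, ← hsum_sq]
  nlinarith [mul_le_mul_of_nonneg_left hS_sq (Nat.cast_nonneg (α := ℝ) #T)]

section SampleStatistics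

variable {ι : Type*} [Fintype ι]

noncomputable def sampleMean (x : ι → ℝ) : ℝ := (1 / Fintype.card ι) * ∑ j, x j

noncomputable def sampleStd (x : ι → ℝ) : ℝ :=
  √((1 / Fintype.card ι) * ∑ j, (x j - sampleMean x) ^ 2)

theorem sum_sub_sampleMean (x : ι → ℝ) : ∑ j, (x j - sampleMean x) = 0 := by
  rcases isEmpty_or_nonempty ι with hι | hι
  · simp
  simp [sum_sub_distrib, sampleMean]

theorem sum_sq_sub_sampleMean (x : ι → ℝ) :
    ∑ j, (x j - sampleMean x) ^ 2 = Fintype.card ι * sampleStd x ^ 2 := by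
  rcases isEmpty_or_nonempty ι with hι | hι
  · simp
  rw [sampleStd, Real.sq_sqrt (by positivity)]
  field_simp

theorem card_pos_of_sampleStd_pos {x : ι → ℝ} (hx : 0 < sampleStd x) :
    0 < Fintype.card ι := by
  rcases isEmpty_or_nonempty ι with hι | hι
  · simp [sampleStd] at hx
  exact Fintype.card_pos

theorem card_sampleDeviation_ge_mul_le (x : ι → ℝ) (hx : 0 < sampleStd x) {c : ℝ}
    (hc : 0 ≤ c) :
    (#{j | c * sampleStd x ≤ x j - sampleMean x} : ℝ) * (c ^ 2 + 1) ≤ Fintype.card ι := by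
  have hN : (0 : ℝ) < Fintype.card ι := by exact_mod_cast card_pos_of_sampleStd_pos hx
  have key := finite_cantelli _ (sum_sub_sampleMean x) (mul_nonneg hc hx.le)
  rw [sum_sq_sub_sampleMean] at key
  have : (#{j | c * sampleStd x ≤ x j - sampleMean x} : ℝ) * c ^ 2 ≤
      Fintype.card ι - #{j | c * sampleStd x ≤ x j - sampleMean x} :=
    le_of_mul_le_mul_right (by linear_combination key) (mul_pos hN (pow_pos hx 2))
  linarith

theorem sampleMean_comp_perm (x : ι → ℝ) (e : Equiv.Perm ι) :
    sampleMean (x ∘ e) = sampleMean x := by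
  simp only [sampleMean, Function.comp_apply, Equiv.sum_comp e x]

theorem sampleStd_comp_perm (x : ι → ℝ) (e : Equiv.Perm ι) :
    sampleStd (x ∘ e) = sampleStd x := by
  simp only [sampleStd, sampleMean_comp_perm, Function.comp_apply,
    Equiv.sum_comp e (fun j => (x j - sampleMean x) ^ 2)]

@[fun_prop]
theorem measurable_sampleMean : Measurable (sampleMean : (ι → ℝ) → ℝ) := by
  unfold sampleMean; fun_prop

@[fun_prop]
theorem measurable_sampleStd : Measurable (sampleStd : (ι → ℝ) → ℝ) := by
  unfold sampleStd; fun_prop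

end SampleStatistics

section Exchangeability

variable {Ω ι : Type*} [MeasurableSpace Ω] {μ : Measure Ω}

theorem ProbabilityTheory.iIndepFun.identDistrib_comp_perm [Countable ι] {E : Type*}
    [MeasurableSpace E] {X : ι → Ω → E} (hind : iIndepFun X μ)
    (hident : ∀ i j, IdentDistrib (X i) (X j) μ μ)
    (e : Equiv.Perm ι) :
    IdentDistrib (fun ω k => X (e k) ω) (fun ω k => X k ω) μ μ :=
  .pi (fun k => hident (e k) k) (hind.precomp e.injective) hind

theorem measure_sampleDeviation_ge_eq [Fintype ι] [DecidableEq ι] {X : ι → Ω → ℝ}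
    (hind : iIndepFun X μ) (hident : ∀ i j, IdentDistrib (X i) (X j) μ μ) (c : ℝ)
    (i j : ι) :
    μ {ω | c * sampleStd (X · ω) ≤ X j ω - sampleMean (X · ω)} =
      μ {ω | c * sampleStd (X · ω) ≤ X i ω - sampleMean (X · ω)} := by
  let B : ι → Set (ι → ℝ) := fun k => {x | c * sampleStd x ≤ x k - sampleMean x}
  have hB : MeasurableSet (B j) := measurableSet_le (by fun_prop) (by fun_prop)
  have hswap :
      (fun ω k => X (Equiv.swap i j k) ω) ⁻¹' B j = (fun ω k => X k ω) ⁻¹' B i := by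
    ext ω
    have := sampleStd_comp_perm (X · ω) (Equiv.swap i j)
    have := sampleMean_comp_perm (X · ω) (Equiv.swap i j)
    simp_all [B, Function.comp_def]
  calc μ ((fun ω k => X k ω) ⁻¹' B j)
      = μ ((fun ω k => X (Equiv.swap i j k) ω) ⁻¹' B j) :=
        ((hind.identDistrib_comp_perm hident (Equiv.swap i j)).measure_mem_eq hB).symm
    _ = μ ((fun ω k => X k ω) ⁻¹' B i) := by rw [hswap]

end Exchangeability

section Averaging

variable {Ω ι : Type*} [MeasurableSpace Ω] {μ : Measure Ω} [Fintype ι]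

open Classical in
theorem sum_measure_eq_lintegral_card_mem {A : ι → Set Ω}
    (hA : ∀ j, NullMeasurableSet (A j) μ) :
    ∑ j, μ (A j) = ∫⁻ ω, (#{j | ω ∈ A j} : ℝ≥0∞) ∂μ := by
  calc ∑ j, μ (A j) = ∑ j, ∫⁻ ω, (A j).indicator 1 ω ∂μ := by
        simp only [lintegral_indicator_one₀ (hA _)]
    _ = ∫⁻ ω, ∑ j, (A j).indicator 1 ω ∂μ :=
        (lintegral_finsetSum' _ fun j _ => aemeasurable_one.indicator₀ (hA j)).symm
    _ = ∫⁻ ω, (#{j | ω ∈ A j} : ℝ≥0∞) ∂μ := by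
        simp only [natCast_card_filter, Set.indicator_apply, Pi.one_apply]

open Classical in
theorem measure_le_of_forall_measure_eq_of_ae_card_le [IsProbabilityMeasure μ] {A : ι → Set Ω}
    (hA : ∀ j, NullMeasurableSet (A j) μ) (i : ι) (heq : ∀ j, μ (A j) = μ (A i)) {c : ℝ}
    (hc : ∀ᵐ ω ∂μ, (#{j | ω ∈ A j} : ℝ) ≤ Fintype.card ι * c) :
    μ (A i) ≤ ENNReal.ofReal c := by
  have hN : (Fintype.card ι : ℝ≥0∞) ≠ 0 :=
    Nat.cast_ne_zero.mpr (Fintype.card_pos_iff.mpr ⟨i⟩).ne'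
  refine (ENNReal.mul_le_mul_iff_right hN (ENNReal.natCast_ne_top _)).mp ?_
  calc Fintype.card ι * μ (A i) = ∑ j, μ (A j) := by simp [heq]
    _ = ∫⁻ ω, (#{j | ω ∈ A j} : ℝ≥0∞) ∂μ := sum_measure_eq_lintegral_card_mem hA
    _ ≤ ∫⁻ _, ENNReal.ofReal (Fintype.card ι * c) ∂μ := by
        refine lintegral_mono_ae (hc.mono fun ω hω => ?_)
        rw [← ENNReal.ofReal_natCast]
        exact ENNReal.ofReal_le_ofReal hω
    _ = Fintype.card ι * ENNReal.ofReal c := by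
        simp [ENNReal.ofReal_mul]

end Averaging

theorem in_sample_cantelli_general
    {Ω : Type*} [MeasurableSpace Ω] (μ : Measure Ω) [IsProbabilityMeasure μ]
    (Ns : ℕ)
    (Xs : Fin Ns → Ω → ℝ)
    (hIndep : iIndepFun Xs μ)
    (hIdent : ∀ i j : Fin Ns, IdentDistrib (Xs i) (Xs j) μ μ)
    (Xhat : Ω → ℝ) (hXhat : ∀ ω, Xhat ω = (1 / (Ns : ℝ)) * ∑ i, Xs i ω)
    (sd : Ω → ℝ)
    (hsd : ∀ ω, sd ω = Real.sqrt ((1 / (Ns : ℝ)) * ∑ i, (Xs i ω - Xhat ω) ^ 2))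
    (hsd_pos : ∀ᵐ ω ∂μ, 0 < sd ω)
    (lam : ℝ) (hlam : 0 < lam) (i : Fin Ns) :
    μ {ω | lam * sd ω ≤ Xs i ω - Xhat ω} ≤
      ENNReal.ofReal (1 / (lam ^ 2 + 1)) := by
  have hXhat' : ∀ ω, Xhat ω = sampleMean (Xs · ω) := by simp [sampleMean, hXhat]
  have hsd' : ∀ ω, sd ω = sampleStd (Xs · ω) := by simp [sampleStd, hsd, hXhat']
  simp only [hXhat', hsd'] at hsd_pos ⊢
  refine measure_le_of_forall_measure_eq_of_ae_card_le (fun j => ?_) i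
    (measure_sampleDeviation_ge_eq hIndep hIdent lam i) ?_
  · have hXs : ∀ k, AEMeasurable (Xs k) μ := fun k => (hIdent k k).aemeasurable_fst
    exact nullMeasurableSet_le (by fun_prop) (by fun_prop)
  · filter_upwards [hsd_pos] with ω hω
    rw [mul_one_div, le_div_iff₀ (by positivity)]
    exact card_sampleDeviation_ge_mul_le (Xs · ω) hω hlam.le

/-- **In-sample Cantelli bound (Lemma 5).**
Let `X₁, …, X_{Ns}` be i.i.d. real-valued random variables on a probability
space, `Ns ≥ 2`.  With `X̂` the sample mean and `σ̂` the (uncorrected) sample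
standard deviation, assumed a.s. positive, for every `λ > 0` and every index
`i`, `P(Xᵢ − X̂ ≥ λ σ̂) ≤ 1 / (λ² + 1)`. -/
theorem in_sample_cantelli
    {Ω : Type*} [MeasurableSpace Ω] (μ : Measure Ω) [IsProbabilityMeasure μ]
    (Ns : ℕ) (hNs : 2 ≤ Ns)
    (Xs : Fin Ns → Ω → ℝ)
    (hXsmeas : ∀ i, Measurable (Xs i))
    (hIndep : iIndepFun Xs μ)
    (hIdent : ∀ i j : Fin Ns, IdentDistrib (Xs i) (Xs j) μ μ)
    (Xhat : Ω → ℝ) (hXhat : ∀ ω, Xhat ω = (1 / (Ns : ℝ)) * ∑ i, Xs i ω)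
    (sd : Ω → ℝ)
    (hsd : ∀ ω, sd ω = Real.sqrt ((1 / (Ns : ℝ)) * ∑ i, (Xs i ω - Xhat ω) ^ 2))
    (hsd_pos : ∀ᵐ ω ∂μ, 0 < sd ω)
    (lam : ℝ) (hlam : 0 < lam) (i : Fin Ns) :
    μ {ω | lam * sd ω ≤ Xs i ω - Xhat ω} ≤
      ENNReal.ofReal (1 / (lam ^ 2 + 1)) :=
  in_sample_cantelli_general μ Ns Xs hIndep hIdent Xhat hXhat sd hsd hsd_pos lam hlam i
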